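/- arXiv:1705.00826 — 7 statements merged into one kernel-verified Lean document; each statement's English description precedes it below -/
import Mathlib

section
/- Let G = (V,E) be a finite simple graph and let v ∈ V. If there exists a vertex u adjacent to v such that N[u] ⊆ N[v], then v is total domination-covered in G; that is, every total dominating set of G∖v is a total dominating set of G, and the total dominating sets of G∖v are exactly those total dominating sets of G not containing v. -/
open Polynomial

/-- `D` is a total dominating set of `G`: every vertex has a neighbor in `D`. -/
def SimpleGraph.IsTDS {V : Type*} (G : SimpleGraph V) (D : Finset V) : Prop :=
  ∀ v, ∃ u ∈ D, G.Adj v u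

/-- `d_t(G,i)`: the number of total dominating sets of `G` of cardinality `i`. -/
noncomputable def SimpleGraph.dt {V : Type*} [Fintype V] (G : SimpleGraph V) (i : ℕ) : ℕ :=
  Set.ncard {D : Finset V | D.card = i ∧ G.IsTDS D}

/-- The total domination polynomial `D_t(G,x) = Σ_{i=1}^{n} d_t(G,i) xⁱ` (over `ℂ`). -/
noncomputable def SimpleGraph.DtPoly {V : Type*} [Fintype V] (G : SimpleGraph V) :
    Polynomial ℂ :=
  ∑ i ∈ Finset.Icc 1 (Fintype.card V), Polynomial.C (G.dt i : ℂ) * Polynomial.X ^ i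

/-- `w` is a support vertex of `G`: it is adjacent to a leaf (a vertex of degree one). -/
def SimpleGraph.IsSupportVertex {V : Type*} (G : SimpleGraph V) (w : V) : Prop :=
  ∃ l, G.Adj w l ∧ G.neighborSet l = {w}

/-- The total domination number: minimum cardinality of a total dominating set. -/
noncomputable def SimpleGraph.gammaT {V : Type*} [Fintype V] (G : SimpleGraph V) : ℕ :=
  sInf {i | ∃ D : Finset V, D.card = i ∧ G.IsTDS D}

theorem SimpleGraph.exists_mem_adj_of_closedNbhd_subset {V : Type*} {G : SimpleGraph V}
    {u v : V} {D : Set V}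
    (hsub : insert u (G.neighborSet u) ⊆ insert v (G.neighborSet v)) (hvD : v ∉ D)
    (hu : ∃ x ∈ D, G.Adj u x) : ∃ x ∈ D, G.Adj v x := by
  obtain ⟨x, hxD, hux⟩ := hu
  rcases hsub (Set.mem_insert_of_mem u hux) with rfl | hvx
  · exact absurd hxD hvD
  · exact ⟨x, hxD, hvx⟩

theorem stmt_0_general {V : Type*} (G : SimpleGraph V) (v : V)
    (h : ∃ u, G.Adj v u ∧
      insert u (G.neighborSet u) ⊆ insert v (G.neighborSet v)) :
    ∀ D : Finset V,
      (v ∉ D ∧ ∀ w, w ≠ v → ∃ u ∈ D, G.Adj w u) ↔ (G.IsTDS D ∧ v ∉ D) := by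
  obtain ⟨u, hvu, hsub⟩ := h
  intro D
  constructor
  · rintro ⟨hvD, hdom⟩
    refine ⟨fun w => ?_, hvD⟩
    rcases eq_or_ne w v with rfl | hwv
    · exact G.exists_mem_adj_of_closedNbhd_subset (D := D) hsub hvD (hdom u hvu.ne')
    · exact hdom w hwv
  · rintro ⟨hD, hvD⟩
    exact ⟨hvD, fun w _ => hD w⟩

/-- If some vertex `u` adjacent to `v` satisfies `N[u] ⊆ N[v]`, then `v` is total
domination-covered: the total dominating sets of `G∖v` (subsets of `V∖{v}` totally
dominating every vertex other than `v` in the deleted graph) are exactly the total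
dominating sets of `G` not containing `v`. -/
theorem stmt_0 {V : Type*} [Fintype V] (G : SimpleGraph V) (v : V)
    (h : ∃ u, G.Adj v u ∧
      insert u (G.neighborSet u) ⊆ insert v (G.neighborSet v)) :
    ∀ D : Finset V,
      (v ∉ D ∧ ∀ w, w ≠ v → ∃ u ∈ D, G.Adj w u) ↔ (G.IsTDS D ∧ v ∉ D) :=
  stmt_0_general G v h
end

section
/- Let G = (V,E) be a finite simple graph and let e = {u,v} ∈ E. If e is an irrelevant edge of G (i.e., D_t(G,x) = D_t(G∖e,x)), then both u and v are total domination-covered in G∖e; that is, for w ∈ {u,v}, every total dominating set of (G∖e)∖w is a total dominating set of G∖e, and the total dominating sets of (G∖e)∖w are exactly those total dominating sets of G∖e not containing w. -/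
open Polynomial

/-!
Every total dominating set of `G ∖ e` is one of `G`, so equal counts in each size force
`G` and `G ∖ e` to have the same total dominating sets. Now let `e = uv` and let `D` dominate
every vertex other than `u` in `G ∖ e`. Then `D ∪ {v}` is a total dominating set of `G`, hence
of `G ∖ e`, and the neighbour of `u` it provides in `G ∖ e` is not `v`, so it lies in `D`.
-/

namespace SimpleGraph

variable {V : Type*}

theorem IsTDS.mono {G H : SimpleGraph V} (hGH : G ≤ H) {D : Finset V} (hD : G.IsTDS D) :
    H.IsTDS D := fun x => by
  obtain ⟨y, hy, hxy⟩ := hD x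
  exact ⟨y, hy, hGH hxy⟩

variable [Fintype V]

theorem dt_eq_of_dtPoly_eq {G H : SimpleGraph V} (h : G.DtPoly = H.DtPoly) {i : ℕ}
    (hi : i ∈ Finset.Icc 1 (Fintype.card V)) : G.dt i = H.dt i := by
  have hcoeff := congrArg (coeff · i) h
  simp only [DtPoly, finsetSum_coeff, coeff_C_mul, coeff_X_pow, mul_ite, mul_one, mul_zero,
    Finset.sum_ite_eq, hi, if_true] at hcoeff
  exact_mod_cast hcoeff

theorem IsTDS.of_le_of_dtPoly_eq {G H : SimpleGraph V} (hHG : H ≤ G)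
    (h : G.DtPoly = H.DtPoly) {D : Finset V} (hD : G.IsTDS D) : H.IsTDS D := by
  rcases D.eq_empty_or_nonempty with rfl | hne
  · exact fun x => by simpa using hD x
  have hcard : D.card ∈ Finset.Icc 1 (Fintype.card V) :=
    Finset.mem_Icc.2 ⟨hne.card_pos, D.card_le_univ⟩
  have hsub : {E : Finset V | E.card = D.card ∧ H.IsTDS E}
      ⊆ {E : Finset V | E.card = D.card ∧ G.IsTDS E} :=
    fun E hE => ⟨hE.1, hE.2.mono hHG⟩
  have hsets := Set.eq_of_subset_of_ncard_le hsub (dt_eq_of_dtPoly_eq h hcard).le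
    (Set.toFinite _)
  have hDmem : D ∈ {E : Finset V | E.card = D.card ∧ H.IsTDS E} := hsets ▸ ⟨rfl, hD⟩
  exact hDmem.2

theorem isTDS_deleteEdges_of_forall_ne {G : SimpleGraph V} {u v : V} (he : G.Adj u v)
    (h : G.DtPoly = (G.deleteEdges {s(u, v)}).DtPoly) {D : Finset V}
    (hD : ∀ x, x ≠ u → ∃ y ∈ D, (G.deleteEdges {s(u, v)}).Adj x y) :
    (G.deleteEdges {s(u, v)}).IsTDS D := by
  classical
  have hG : G.IsTDS (insert v D) := fun x => by
    by_cases hxu : x = u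
    · exact ⟨v, D.mem_insert_self v, hxu ▸ he⟩
    · obtain ⟨y, hy, hxy⟩ := hD x hxu
      exact ⟨y, Finset.mem_insert_of_mem hy, (deleteEdges_adj.1 hxy).1⟩
  obtain ⟨y, hy, huy⟩ := hG.of_le_of_dtPoly_eq (deleteEdges_le _) h u
  have hyv : y ≠ v := by
    rintro rfl
    exact (deleteEdges_adj.1 huy).2 rfl
  intro x
  by_cases hxu : x = u
  · exact ⟨y, (Finset.mem_insert.1 hy).resolve_left hyv, hxu ▸ huy⟩
  · exact hD x hxu

end SimpleGraph

/-- If `e = {u,v}` is an irrelevant edge of `G` (i.e. `D_t(G,x) = D_t(G∖e,x)`), then both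
endpoints `u` and `v` are total domination-covered in `G∖e`: for `w ∈ {u,v}`, the total
dominating sets of `(G∖e)∖w` are exactly the total dominating sets of `G∖e` not
containing `w`. -/
theorem stmt_1 {V : Type*} [Fintype V] (G : SimpleGraph V) (u v : V) (he : G.Adj u v)
    (hirr : G.DtPoly = (G.deleteEdges {s(u, v)}).DtPoly) :
    ∀ w ∈ ({u, v} : Set V), ∀ D : Finset V,
      (w ∉ D ∧ ∀ x, x ≠ w → ∃ y ∈ D, (G.deleteEdges {s(u, v)}).Adj x y) ↔
        ((G.deleteEdges {s(u, v)}).IsTDS D ∧ w ∉ D) := by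
  have hswap : s(v, u) = s(u, v) := Sym2.eq_swap
  rintro w (rfl | rfl) D <;>
    refine ⟨fun ⟨hw, hD⟩ => ⟨?_, hw⟩, fun ⟨hD, hw⟩ => ⟨hw, fun x _ => hD x⟩⟩
  · exact SimpleGraph.isTDS_deleteEdges_of_forall_ne he hirr hD
  · rw [← hswap] at hirr hD ⊢
    exact SimpleGraph.isTDS_deleteEdges_of_forall_ne he.symm hirr hD
end

section
/- For all natural numbers n ≥ 1 and k ≥ 3, the total domination number of the (n,k)-firecracker graph F(n,k) equals 2n. -/
open Polynomial

/-- The `(n,k)`-firecracker graph `F(n,k)`: `n` disjoint copies of the star `S_k`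
(in copy `i`, vertex `(i,0)` is the center, adjacent to the leaves `(i,j)`, `j ≠ 0`),
concatenated by joining the chosen leaf `(i,1)` of copy `i` to the chosen leaf
`(i+1,1)` of copy `i+1`. -/
def firecracker (n k : ℕ) : SimpleGraph (Fin n × Fin k) :=
  SimpleGraph.fromRel (fun a b =>
    (a.1 = b.1 ∧ (a.2 : ℕ) = 0 ∧ (b.2 : ℕ) ≠ 0) ∨
    ((a.1 : ℕ) + 1 = (b.1 : ℕ) ∧ (a.2 : ℕ) = 1 ∧ (b.2 : ℕ) = 1))


/-!
Every leaf of a star other than the chosen one has the center as its only neighbour, so a total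
dominating set contains all `n` centers; to dominate the center it must also contain a leaf of
the same star. Hence each star contributes at least two vertices. Conversely the centers together
with the chosen leaves attain `2n`: each center dominates its star and is dominated by its chosen
leaf.
-/

open Finset

namespace SimpleGraph

theorem gammaT_eq_card_of_isTDS {V : Type*} [Fintype V] {G : SimpleGraph V} {D : Finset V}
    (hD : G.IsTDS D) (hmin : ∀ D' : Finset V, G.IsTDS D' → D.card ≤ D'.card) :
    G.gammaT = D.card :=
  le_antisymm (Nat.sInf_le ⟨D, rfl, hD⟩)
    (le_csInf ⟨_, D, rfl, hD⟩ (by rintro _ ⟨D', rfl, hD'⟩; exact hmin D' hD'))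

end SimpleGraph

namespace firecracker

variable {n k : ℕ}

theorem adj_of_val_eq_zero {a b : Fin n × Fin k} (ha : (a.2 : ℕ) = 0) :
    (firecracker n k).Adj a b ↔ b.1 = a.1 ∧ (b.2 : ℕ) ≠ 0 := by
  simp only [firecracker, SimpleGraph.fromRel_adj, ne_eq, Prod.ext_iff, Fin.ext_iff, ha]
  grind

theorem adj_of_two_le_val {a b : Fin n × Fin k} (ha : 2 ≤ (a.2 : ℕ)) :
    (firecracker n k).Adj a b ↔ b.1 = a.1 ∧ (b.2 : ℕ) = 0 := by
  simp only [firecracker, SimpleGraph.fromRel_adj, ne_eq, Prod.ext_iff, Fin.ext_iff]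
  grind

theorem isTDS_centers_union_chosenLeaves (hk : 2 ≤ k) :
    (firecracker n k).IsTDS (univ ×ˢ {⟨0, by omega⟩, ⟨1, hk⟩}) := by
  rintro ⟨i, j⟩
  by_cases hj : (j : ℕ) = 0
  · exact ⟨(i, ⟨1, hk⟩), by simp, (adj_of_val_eq_zero hj).2 ⟨rfl, one_ne_zero⟩⟩
  · refine ⟨(i, ⟨0, by omega⟩), by simp, SimpleGraph.Adj.symm ?_⟩
    exact (adj_of_val_eq_zero rfl).2 ⟨rfl, hj⟩

theorem two_le_card_filter_fst_eq_of_isTDS (hk : 3 ≤ k) {D : Finset (Fin n × Fin k)}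
    (hD : (firecracker n k).IsTDS D) (i : Fin n) : 2 ≤ (D.filter (·.1 = i)).card := by
  obtain ⟨c, hcD, hc⟩ := hD (i, ⟨2, by omega⟩)
  rw [adj_of_two_le_val le_rfl] at hc
  obtain ⟨l, hlD, hl⟩ := hD c
  rw [adj_of_val_eq_zero hc.2] at hl
  refine one_lt_card.2 ⟨c, ?_, l, ?_, fun h => hl.2 (h ▸ hc.2)⟩
  · simp [hcD, hc.1]
  · simp [hlD, hl.1, hc.1]

theorem two_mul_le_card_of_isTDS (hk : 3 ≤ k) {D : Finset (Fin n × Fin k)}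
    (hD : (firecracker n k).IsTDS D) : 2 * n ≤ D.card :=
  calc 2 * n = ∑ _i : Fin n, 2 := by simp [mul_comm]
    _ ≤ ∑ i, (D.filter (·.1 = i)).card :=
      sum_le_sum fun i _ => two_le_card_filter_fst_eq_of_isTDS hk hD i
    _ = D.card := (card_eq_sum_card_fiberwise fun v _ => mem_univ v.1).symm

end firecracker

theorem stmt_4_general (n k : ℕ) (hk : 3 ≤ k) :
    (firecracker n k).gammaT = 2 * n := by
  have hD := firecracker.isTDS_centers_union_chosenLeaves (n := n) (show 2 ≤ k by omega)
  have hcard : (univ ×ˢ {⟨0, by omega⟩, ⟨1, by omega⟩} : Finset (Fin n × Fin k)).card = 2 * n := by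
    rw [card_product, card_univ, Fintype.card_fin, card_pair (by simp [Fin.ext_iff]), mul_comm]
  rw [← hcard]
  exact SimpleGraph.gammaT_eq_card_of_isTDS hD
    fun D' hD' => hcard ▸ firecracker.two_mul_le_card_of_isTDS hk hD'

/-- For `n ≥ 1` and `k ≥ 3`, the total domination number of `F(n,k)` is `2n`. -/
theorem stmt_4 (n k : ℕ) (hn : 1 ≤ n) (hk : 3 ≤ k) :
    (firecracker n k).gammaT = 2 * n :=
  stmt_4_general n k hk
end

section
/- For all natural numbers n ≥ 1 and k ≥ 3, the total domination polynomial of the (n,k)-firecracker graph satisfies D_t(F(n,k),x) = (x(x+1)^{k−1} − x)^n. -/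
open Polynomial

/-!
A set `D` is total dominating in `F(n,k)` iff in every copy of the star it contains the center
and at least one leaf: a leaf other than the chosen one (it exists since `k ≥ 3`) has the center
as its only neighbour, the center has exactly the leaves as neighbours, and the edges between
chosen leaves are never needed. The choices in the `n` stars are independent, so the generating
function of total dominating sets by size is the `n`-th power of
`∑_{0 ∈ s, s ≠ {0}} x^|s| = x (x + 1)^(k-1) - x`.
-/

open Finset

namespace SimpleGraph

variable {V : Type*}

theorem IsTDS.nonempty [Nonempty V] {G : SimpleGraph V} {D : Finset V} (hD : G.IsTDS D) :
    D.Nonempty :=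
  let ⟨u, hu, _⟩ := hD (Classical.arbitrary V)
  ⟨u, hu⟩

variable (G : SimpleGraph V) [Fintype V] [DecidablePred G.IsTDS]

theorem dt_eq_card (i : ℕ) : G.dt i = #{D : Finset V | G.IsTDS D ∧ #D = i} := by
  rw [dt, ← Set.ncard_coe_finset]
  congr 1
  ext D
  simp [and_comm]

theorem dtPoly_eq_sum [Nonempty V] : G.DtPoly = ∑ D : Finset V with G.IsTDS D, X ^ #D := by
  have hcard : ∀ D ∈ ({D | G.IsTDS D} : Finset (Finset V)), #D ∈ Icc 1 (Fintype.card V) :=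
    fun D hD => mem_Icc.2 ⟨(mem_filter.1 hD).2.nonempty.card_pos, card_le_univ D⟩
  rw [DtPoly, ← sum_fiberwise_of_maps_to hcard]
  refine sum_congr rfl fun i _ => ?_
  rw [sum_congr rfl fun D hD => by rw [(mem_filter.1 hD).2], sum_const, nsmul_eq_mul,
    filter_filter, dt_eq_card]
  simp

end SimpleGraph

namespace Finset

variable {ι κ : Type*} [DecidableEq ι] [Fintype κ] [DecidableEq κ]

def row (D : Finset (ι × κ)) (i : ι) : Finset κ := {j | (i, j) ∈ D}

@[simp] theorem mem_row {D : Finset (ι × κ)} {i : ι} {j : κ} : j ∈ D.row i ↔ (i, j) ∈ D := by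
  simp [row]

theorem card_eq_sum_card_row [Fintype ι] (D : Finset (ι × κ)) : #D = ∑ i, #(D.row i) := by
  rw [card_eq_sum_card_fiberwise fun p _ => mem_univ p.1]
  refine sum_congr rfl fun i _ => card_nbij' Prod.snd (Prod.mk i) ?_ ?_ ?_ ?_
  all_goals intro p; aesop

theorem sum_filter_forall_row_pow_card {R : Type*} [CommSemiring R] [Fintype ι]
    (P : Finset κ → Prop) [DecidablePred P]
    [DecidablePred fun D : Finset (ι × κ) => ∀ i, P (D.row i)] (x : R) :
    ∑ D : Finset (ι × κ) with ∀ i, P (D.row i), x ^ #D =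
      (∑ s : Finset κ with P s, x ^ #s) ^ Fintype.card ι := by
  rw [← card_univ, ← prod_const, prod_univ_sum]
  have hrow (s : ι → Finset κ) (i : ι) : row ({p | p.2 ∈ s p.1} : Finset (ι × κ)) i = s i := by
    ext; simp
  refine sum_nbij' row (fun s => ({p | p.2 ∈ s p.1} : Finset (ι × κ))) ?_ ?_ ?_ ?_ ?_
  · intro D hD; simpa using hD
  · intro s hs; simpa [hrow] using hs
  · intro D _; ext p; simp
  · intro s _; funext i; exact hrow s i
  · intro D _; rw [card_eq_sum_card_row, prod_pow_eq_pow_sum]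

theorem sum_filter_mem_pow_card {R : Type*} [CommSemiring R] (c : κ) (x : R) :
    ∑ s : Finset κ with c ∈ s, x ^ #s = x * (x + 1) ^ (Fintype.card κ - 1) := by
  have hc : c ∉ univ.erase c := notMem_erase c univ
  have hc' (t) (ht : t ∈ (univ.erase c).powerset) : c ∉ t := notMem_mono (mem_powerset.1 ht) hc
  have hbinom := sum_pow_mul_eq_add_pow x 1 (univ.erase c)
  simp only [one_pow, mul_one, card_erase_of_mem (mem_univ c), card_univ] at hbinom
  rw [sum_filter, ← powerset_univ, ← insert_erase (mem_univ c), sum_powerset_insert hc,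
    sum_eq_zero fun t ht => if_neg (hc' t ht), zero_add, ← hbinom, mul_sum]
  exact sum_congr rfl fun t ht => by
    rw [if_pos (mem_insert_self c t), card_insert_of_notMem (hc' t ht), pow_succ']

theorem sum_filter_mem_exists_ne_pow_card {R : Type*} [CommRing R] (c : κ)
    [DecidablePred fun s : Finset κ => c ∈ s ∧ ∃ j ∈ s, j ≠ c] (x : R) :
    ∑ s : Finset κ with c ∈ s ∧ ∃ j ∈ s, j ≠ c, x ^ #s =
      x * (x + 1) ^ (Fintype.card κ - 1) - x := by
  have hfilter : ({s | c ∈ s ∧ ∃ j ∈ s, j ≠ c} : Finset (Finset κ)) =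
      ({s | c ∈ s} : Finset (Finset κ)).erase {c} := by
    ext s
    simp only [mem_filter, mem_univ, true_and, mem_erase, ne_eq, eq_singleton_iff_unique_mem]
    grind
  rw [hfilter, sum_erase_eq_sub (by simp), sum_filter_mem_pow_card, card_singleton, pow_one]

end Finset

namespace firecracker

variable {n k : ℕ} [NeZero k]

theorem adj_center_iff {i : Fin n} {b : Fin n × Fin k} :
    (firecracker n k).Adj (i, 0) b ↔ b.1 = i ∧ b.2 ≠ 0 := by
  obtain ⟨b1, b2⟩ := b
  simp only [firecracker, SimpleGraph.fromRel_adj, ne_eq, Prod.ext_iff, Fin.ext_iff, Fin.val_zero]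
  grind

theorem adj_iff_of_ne_zero_one {i : Fin n} {j : Fin k} (hj0 : (j : ℕ) ≠ 0) (hj1 : (j : ℕ) ≠ 1)
    {b : Fin n × Fin k} : (firecracker n k).Adj (i, j) b ↔ b = (i, 0) := by
  obtain ⟨b1, b2⟩ := b
  simp only [firecracker, SimpleGraph.fromRel_adj, ne_eq, Prod.ext_iff, Fin.ext_iff, Fin.val_zero]
  omega

theorem isTDS_iff (hk : 3 ≤ k) {D : Finset (Fin n × Fin k)} :
    (firecracker n k).IsTDS D ↔ ∀ i, 0 ∈ D.row i ∧ ∃ j ∈ D.row i, j ≠ 0 := by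
  simp only [mem_row]
  refine ⟨fun hD i => ⟨?_, ?_⟩, fun hD v => ?_⟩
  · obtain ⟨u, hu, hadj⟩ := hD (i, ⟨2, hk⟩)
    rwa [adj_iff_of_ne_zero_one (by simp) (by simp) |>.1 hadj] at hu
  · obtain ⟨u, hu, hadj⟩ := hD (i, 0)
    obtain ⟨rfl, hu0⟩ := adj_center_iff.1 hadj
    exact ⟨u.2, hu, hu0⟩
  · obtain ⟨i, j⟩ := v
    obtain ⟨hcenter, l, hl, hl0⟩ := hD i
    by_cases hj : j = 0
    · exact ⟨(i, l), hl, hj ▸ adj_center_iff.2 ⟨rfl, hl0⟩⟩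
    · exact ⟨(i, 0), hcenter, (adj_center_iff.2 ⟨rfl, hj⟩).symm⟩

end firecracker

/-- For `n ≥ 1` and `k ≥ 3`, `D_t(F(n,k), x) = (x(x+1)^{k-1} - x)^n`. -/
theorem stmt_5 (n k : ℕ) (hn : 1 ≤ n) (hk : 3 ≤ k) :
    (firecracker n k).DtPoly = (X * (X + 1) ^ (k - 1) - X) ^ n := by
  classical
  have : NeZero k := ⟨by omega⟩
  have : Nonempty (Fin n × Fin k) := ⟨(⟨0, hn⟩, 0)⟩
  rw [SimpleGraph.dtPoly_eq_sum]
  simp only [firecracker.isTDS_iff hk]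
  rw [sum_filter_forall_row_pow_card fun s : Finset (Fin k) => 0 ∈ s ∧ ∃ j ∈ s, j ≠ 0,
    sum_filter_mem_exists_ne_pow_card, Fintype.card_fin, Fintype.card_fin]
end

section
/- Let n ≥ 1 and let k_1, k_2, …, k_n be natural numbers with k_i ≥ 3 for all i. Then the total domination polynomial of the generalized firecracker graph satisfies D_t(F(k_1,…,k_n),x) = Π_{i=1}^{n} (x(x+1)^{k_i−1} − x). -/
/-!
Every star has a leaf other than the chosen one, whose only neighbour is the centre, so a total
dominating set contains every centre; a centre is in turn dominated only by leaves of its own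
star, and once all centres are chosen every leaf is dominated. Hence the total dominating sets are
exactly the sets whose trace on each star contains the centre and at least one leaf, and the
generating function factors over the stars, each contributing `x ((x + 1) ^ (kᵢ - 1) - 1)`.
-/

open Polynomial

/-- The generalized firecracker `F(k₁,…,kₙ)`: disjoint copies of the stars `S_{kᵢ}`
(in copy `i`, vertex `⟨i,0⟩` is the center, adjacent to the leaves `⟨i,j⟩`, `j ≠ 0`),
concatenated by joining the chosen leaf `⟨i,1⟩` of copy `i` to the chosen leaf
`⟨i+1,1⟩` of copy `i+1`. -/
def genFirecracker (n : ℕ) (k : Fin n → ℕ) : SimpleGraph ((i : Fin n) × Fin (k i)) :=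
  SimpleGraph.fromRel (fun a b =>
    ((a.1 : ℕ) = (b.1 : ℕ) ∧ (a.2 : ℕ) = 0 ∧ (b.2 : ℕ) ≠ 0) ∨
    ((a.1 : ℕ) + 1 = (b.1 : ℕ) ∧ (a.2 : ℕ) = 1 ∧ (b.2 : ℕ) = 1))

open Finset

namespace SimpleGraph

variable {V : Type*} [Fintype V] (G : SimpleGraph V)

theorem dt_eq_card_filter [DecidablePred G.IsTDS] (i : ℕ) :
    G.dt i = #{D : Finset V | D.card = i ∧ G.IsTDS D} := by
  rw [dt, ← Set.ncard_coe_finset, coe_filter]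
  simp only [mem_univ, true_and]

theorem dtPoly_eq_sum_filter_isTDS [Nonempty V] [DecidablePred G.IsTDS] :
    G.DtPoly = ∑ D with G.IsTDS D, (X : ℂ[X]) ^ D.card := by
  have hcard : ∀ D ∈ ({D | G.IsTDS D} : Finset (Finset V)),
      D.card ∈ Icc 1 (Fintype.card V) := by
    intro D hD
    obtain ⟨u, hu, -⟩ := (mem_filter.mp hD).2 (Classical.arbitrary V)
    exact mem_Icc.mpr ⟨card_pos.mpr ⟨u, hu⟩, card_le_univ D⟩
  rw [← sum_fiberwise_of_maps_to hcard, DtPoly]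
  refine sum_congr rfl fun i _ => ?_
  rw [sum_congr rfl fun D hD => congrArg (X ^ ·) (mem_filter.mp hD).2, sum_const, filter_filter,
    dt_eq_card_filter, nsmul_eq_mul, C_eq_natCast]
  simp only [and_comm]

end SimpleGraph

theorem Finset.sum_pow_card_filter_sigma {ι : Type*} [Fintype ι] [DecidableEq ι]
    {α : ι → Type*} [∀ i, Fintype (α i)] {R : Type*} [CommSemiring R] (x : R)
    (P : ∀ i, Finset (α i) → Prop) [∀ i, DecidablePred (P i)]
    [DecidablePred fun D : Finset (Σ i, α i) =>
      ∀ i, P i (D.preimage (Sigma.mk i) sigma_mk_injective.injOn)] :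
    ∑ D : Finset (Σ i, α i) with ∀ i, P i (D.preimage (Sigma.mk i) sigma_mk_injective.injOn),
        x ^ D.card =
      ∏ i, ∑ S with P i S, x ^ S.card := by
  rw [prod_univ_sum]
  refine sum_nbij' (fun D i => D.preimage (Sigma.mk i) sigma_mk_injective.injOn)
    (fun f => univ.sigma f) ?_ ?_ ?_ ?_ ?_
  · intro D hD
    simpa [Fintype.mem_piFinset] using hD
  · intro f hf
    have : ∀ i, (univ.sigma f).preimage (Sigma.mk i) sigma_mk_injective.injOn = f i := by
      intro i; ext j; simp
    simpa [Fintype.mem_piFinset, this] using hf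
  · intro D _
    exact sigma_preimage_mk_of_subset D (subset_univ _)
  · intro f _
    funext i; ext j; simp
  · intro D _
    conv_lhs => rw [← sigma_preimage_mk_of_subset D (subset_univ (D.image Sigma.fst))]
    rw [card_sigma, prod_pow_eq_pow_sum]

theorem Finset.sum_pow_card_filter_mem {α : Type*} [Fintype α] [DecidableEq α]
    {R : Type*} [CommSemiring R] (x : R) (c : α) :
    ∑ S : Finset α with c ∈ S, x ^ S.card = x * (x + 1) ^ (Fintype.card α - 1) := by
  have hc : ∀ t ∈ (univ.erase c).powerset, c ∉ t := fun t ht h => by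
    simpa using mem_powerset.mp ht h
  have himage : ({S | c ∈ S} : Finset (Finset α)) = (univ.erase c).powerset.image (insert c) := by
    ext S
    simp only [mem_filter, mem_univ, true_and, mem_image, mem_powerset]
    refine ⟨fun hcS => ⟨S.erase c, fun y hy => ?_, insert_erase hcS⟩, ?_⟩
    · simpa using (mem_erase.mp hy).1
    · rintro ⟨t, -, rfl⟩; exact mem_insert_self c t
  have hinj : Set.InjOn (insert c) ((univ.erase c).powerset : Set (Finset α)) :=
    fun s hs t ht hst => by rw [← erase_insert (hc s hs), hst, erase_insert (hc t ht)]
  rw [himage, sum_image hinj, ← card_univ, ← card_erase_of_mem (mem_univ c),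
    ← sum_pow_mul_eq_add_pow, mul_sum]
  refine sum_congr rfl fun t ht => ?_
  rw [card_insert_of_notMem (hc t ht), one_pow, mul_one, pow_succ']

theorem Finset.sum_pow_card_filter_mem_ne_singleton {α : Type*} [Fintype α] [DecidableEq α]
    {R : Type*} [CommRing R] (x : R) (c : α) :
    ∑ S : Finset α with c ∈ S ∧ S ≠ {c}, x ^ S.card = x * (x + 1) ^ (Fintype.card α - 1) - x := by
  have : ({S | c ∈ S ∧ S ≠ {c}} : Finset (Finset α)) = ({S | c ∈ S} : Finset _).erase {c} := by
    ext S; simp [and_comm]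
  rw [this, sum_erase_eq_sub (by simp), sum_pow_card_filter_mem, card_singleton, pow_one]

section genFirecracker

variable {n : ℕ} {k : Fin n → ℕ}

theorem genFirecracker_adj_iff_of_snd_eq_zero {a : (i : Fin n) × Fin (k i)} (ha : (a.2 : ℕ) = 0)
    (b : (i : Fin n) × Fin (k i)) : (genFirecracker n k).Adj a b ↔ b.1 = a.1 ∧ (b.2 : ℕ) ≠ 0 := by
  simp only [genFirecracker, SimpleGraph.fromRel_adj, ne_eq, Fin.ext_iff]
  constructor
  · rintro ⟨-, h⟩; omega
  · rintro ⟨h1, h2⟩; refine ⟨?_, by omega⟩; rintro rfl; omega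

theorem genFirecracker_adj_iff_of_two_le_snd {a : (i : Fin n) × Fin (k i)} (ha : 2 ≤ (a.2 : ℕ))
    (b : (i : Fin n) × Fin (k i)) : (genFirecracker n k).Adj a b ↔ b.1 = a.1 ∧ (b.2 : ℕ) = 0 := by
  simp only [genFirecracker, SimpleGraph.fromRel_adj, ne_eq, Fin.ext_iff]
  constructor
  · rintro ⟨-, h⟩; omega
  · rintro ⟨h1, h2⟩; refine ⟨?_, by omega⟩; rintro rfl; omega

theorem genFirecracker_isTDS_iff (hk : ∀ i, 3 ≤ k i) (D : Finset ((i : Fin n) × Fin (k i))) :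
    (genFirecracker n k).IsTDS D ↔ ∀ i,
      ⟨0, by linarith [hk i]⟩ ∈ D.preimage (Sigma.mk i) sigma_mk_injective.injOn ∧
      D.preimage (Sigma.mk i) sigma_mk_injective.injOn ≠ {⟨0, by linarith [hk i]⟩} := by
  simp only [ne_eq, mem_preimage, eq_singleton_iff_unique_mem, not_and, not_forall]
  constructor
  · intro hD i
    -- the leaf `⟨i, 2⟩` can only be dominated by its center, the center only by its leaves
    obtain ⟨⟨i', c⟩, hcD, hcadj⟩ := hD ⟨i, ⟨2, by linarith [hk i]⟩⟩
    obtain ⟨hi : i' = i, hc : (c : ℕ) = 0⟩ :=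
      (genFirecracker_adj_iff_of_two_le_snd le_rfl _).mp hcadj
    subst i'
    obtain ⟨⟨i', j⟩, hjD, hjadj⟩ := hD ⟨i, ⟨0, by linarith [hk i]⟩⟩
    obtain ⟨hi : i' = i, hj : (j : ℕ) ≠ 0⟩ :=
      (genFirecracker_adj_iff_of_snd_eq_zero rfl _).mp hjadj
    subst i'
    obtain rfl : c = ⟨0, by linarith [hk i]⟩ := Fin.ext hc
    exact ⟨hcD, fun _ => ⟨j, hjD, fun h => hj (by simp [h])⟩⟩
  · intro hD ⟨i, j⟩
    obtain ⟨hc, hleaf⟩ := hD i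
    by_cases hj : (j : ℕ) = 0
    · obtain ⟨j', hj'D, hj'⟩ := hleaf hc
      refine ⟨⟨i, j'⟩, hj'D, (genFirecracker_adj_iff_of_snd_eq_zero hj _).mpr ⟨rfl, ?_⟩⟩
      exact fun h => hj' (Fin.ext h)
    · refine ⟨_, hc, SimpleGraph.Adj.symm ?_⟩
      exact (genFirecracker_adj_iff_of_snd_eq_zero rfl _).mpr ⟨rfl, hj⟩

end genFirecracker

/-- For `n ≥ 1` and `kᵢ ≥ 3` for all `i`,
`D_t(F(k₁,…,kₙ), x) = Π_{i=1}^{n} (x(x+1)^{kᵢ-1} - x)`. -/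
theorem stmt_6 (n : ℕ) (k : Fin n → ℕ) (hn : 1 ≤ n) (hk : ∀ i, 3 ≤ k i) :
    (genFirecracker n k).DtPoly = ∏ i : Fin n, (X * (X + 1) ^ (k i - 1) - X) := by
  classical
  have : Nonempty ((i : Fin n) × Fin (k i)) := ⟨⟨⟨0, hn⟩, ⟨0, by linarith [hk ⟨0, hn⟩]⟩⟩⟩
  rw [SimpleGraph.dtPoly_eq_sum_filter_isTDS,
    filter_congr fun D _ => genFirecracker_isTDS_iff hk D,
    sum_pow_card_filter_sigma X fun i S =>
      (⟨0, by linarith [hk i]⟩ : Fin (k i)) ∈ S ∧ S ≠ {⟨0, by linarith [hk i]⟩}]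
  refine prod_congr rfl fun i _ => ?_
  rw [sum_pow_card_filter_mem_ne_singleton, Fintype.card_fin]
end

section
/- The total domination polynomial of the Petersen graph P satisfies D_t(P,x) = x^{10} + 10x^{9} + 45x^{8} + 110x^{7} + 140x^{6} + 72x^{5} + 10x^{4}. -/
open Polynomial

/-- The Petersen graph, realized as the Kneser graph on the 2-element subsets of a
5-element set, two of them adjacent iff they are disjoint. -/
def petersen : SimpleGraph {s : Finset (Fin 5) // s.card = 2} where
  Adj a b := Disjoint (a : Finset (Fin 5)) (b : Finset (Fin 5))
  symm := ⟨fun a b h => h.symm⟩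
  loopless := by
    constructor
    intro a h
    have h1 : (a : Finset (Fin 5)) = ∅ := disjoint_self.mp h
    have h2 := a.2
    rw [h1] at h2
    simp at h2

/-! The coefficients `d_t(P, i)` are found by enumerating all `2¹⁰` vertex subsets of the
Petersen graph, a finite check carried out by `decide` in the kernel. -/

open Finset

namespace SimpleGraph

variable {V : Type*} (G : SimpleGraph V)

instance [Fintype V] [DecidableRel G.Adj] : DecidablePred G.IsTDS := fun D =>
  inferInstanceAs (Decidable (∀ v, ∃ u ∈ D, G.Adj v u))

theorem not_isTDS_empty [Nonempty V] : ¬ G.IsTDS ∅ := fun h => by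
  simpa using h (Classical.arbitrary V)

variable [Fintype V]

theorem dt_eq_card_filter_powersetCard [DecidableRel G.Adj] (i : ℕ) :
    G.dt i = #{D ∈ powersetCard i univ | G.IsTDS D} := by
  rw [dt, ← Set.ncard_coe_finset]
  congr 1
  ext D
  simp

theorem dt_zero [Nonempty V] : G.dt 0 = 0 := by
  have : {D : Finset V | D.card = 0 ∧ G.IsTDS D} = ∅ :=
    Set.eq_empty_of_forall_notMem fun D ⟨hD, hT⟩ => G.not_isTDS_empty (card_eq_zero.mp hD ▸ hT)
  rw [dt, this, Set.ncard_empty]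

theorem dtPoly_eq_sum_range [Nonempty V] :
    G.DtPoly = ∑ i ∈ range (Fintype.card V + 1), C (G.dt i : ℂ) * X ^ i := by
  rw [DtPoly, range_eq_Ico, sum_eq_sum_Ico_succ_bot (Nat.succ_pos _), G.dt_zero]
  simp [Ico_add_one_right_eq_Icc]

end SimpleGraph

instance : DecidableRel petersen.Adj := fun a b =>
  inferInstanceAs (Decidable (Disjoint (a : Finset (Fin 5)) (b : Finset (Fin 5))))

theorem card_petersen_vertices : Fintype.card {s : Finset (Fin 5) // s.card = 2} = 10 := by
  decide

set_option maxHeartbeats 1000000 in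
set_option maxRecDepth 4000 in
theorem petersen_tds_counts :
    (List.range 11).map (fun i => #{D ∈ powersetCard i univ | petersen.IsTDS D}) =
      [0, 0, 0, 0, 10, 72, 140, 110, 45, 10, 1] := by
  decide

theorem petersen_dt :
    (List.range 11).map petersen.dt = [0, 0, 0, 0, 10, 72, 140, 110, 45, 10, 1] := by
  simpa only [← petersen.dt_eq_card_filter_powersetCard] using petersen_tds_counts

/-- The total domination polynomial of the Petersen graph is
`x¹⁰ + 10x⁹ + 45x⁸ + 110x⁷ + 140x⁶ + 72x⁵ + 10x⁴`. -/
theorem stmt_11 :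
    petersen.DtPoly =
      X ^ 10 + 10 * X ^ 9 + 45 * X ^ 8 + 110 * X ^ 7 + 140 * X ^ 6 + 72 * X ^ 5 +
        10 * X ^ 4 := by
  have : Nonempty {s : Finset (Fin 5) // s.card = 2} := ⟨⟨{0, 1}, rfl⟩⟩
  have hdt := petersen_dt
  simp [List.range_succ] at hdt
  rw [petersen.dtPoly_eq_sum_range, card_petersen_vertices]
  simp [sum_range_succ, hdt]
  ring
end

section
/- Let G be a finite simple graph of order n. If the set of distinct complex roots of the total domination polynomial D_t(G,x) is exactly {−2, 0}, then G is not 3-connected; that is, either G has at most 3 vertices, or there exists a set S of at most 2 vertices such that deleting S from G leaves a disconnected graph. -/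
/-!
If `G` has at least four vertices and no separating set of at most two vertices, every vertex has
degree at least three (deleting a neighbourhood would isolate its centre), so every set of at
least `n - 2` vertices is totally dominating and `D_t(G,x)` agrees with `(x+1)^n` in its three
top coefficients. A monic polynomial with root set `{-2, 0}` is `(x+2)^b x^a`; comparing the
coefficients of `x^(n-1)` and `x^(n-2)` gives `n = 2b` and `C(n,2) = 4 C(b,2)`, which are
incompatible.
-/

open Polynomial

namespace SimpleGraph

variable {V : Type*} [Fintype V] (G : SimpleGraph V)

lemma le_degree_of_forall_induce_connected [DecidableRel G.Adj] {k : ℕ}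
    (hk : k < Fintype.card V)
    (hG : ∀ S : Finset V, S.card < k → (G.induce ((S : Set V)ᶜ)).Connected) (v : V) :
    k ≤ G.degree v := by
  classical
  by_contra! hv
  set S := G.neighborFinset v
  have hvS : v ∉ S := by simp [S]
  have : Nontrivial ↥((S : Set V)ᶜ) := by
    rw [← Finset.coe_compl]
    refine Set.Nontrivial.coe_sort (Finset.one_lt_card_iff_nontrivial.mp ?_)
    rw [Finset.card_compl, G.card_neighborFinset_eq_degree]
    omega
  exact (hG S (by rwa [G.card_neighborFinset_eq_degree])).preconnected.not_isIsolated ⟨v, hvS⟩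
    fun w hw ↦ w.2 (by simpa [S] using hw)

lemma isTDS_of_card_lt_card_add_degree [DecidableRel G.Adj] {D : Finset V}
    (hD : ∀ v, Fintype.card V < D.card + G.degree v) : G.IsTDS D := by
  classical
  intro v
  obtain ⟨u, hu⟩ := Finset.inter_nonempty_of_card_lt_card_add_card (Finset.subset_univ D)
    (Finset.subset_univ (G.neighborFinset v)) (by simpa using hD v)
  rw [Finset.mem_inter, mem_neighborFinset] at hu
  exact ⟨u, hu⟩

lemma dt_eq_choose_of_forall_isTDS {k : ℕ} (hk : ∀ D : Finset V, D.card = k → G.IsTDS D) :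
    G.dt k = (Fintype.card V).choose k := by
  have hsets : {D : Finset V | D.card = k ∧ G.IsTDS D} =
      ↑(Finset.univ.powersetCard k : Finset (Finset V)) := by
    ext D
    simpa using fun hD ↦ hk D hD
  rw [dt, hsets, Set.ncard_coe_finset, Finset.card_powersetCard, Finset.card_univ]

lemma coeff_DtPoly {k : ℕ} (hk₁ : 1 ≤ k) (hkn : k ≤ Fintype.card V) :
    G.DtPoly.coeff k = G.dt k := by
  simp [DtPoly, Polynomial.finsetSum_coeff, Polynomial.coeff_X_pow, hk₁, hkn]

lemma natDegree_DtPoly_le : G.DtPoly.natDegree ≤ Fintype.card V :=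
  Polynomial.natDegree_sum_le_of_forall_le _ _ fun _ hi ↦
    (Polynomial.natDegree_C_mul_X_pow_le _ _).trans (Finset.mem_Icc.mp hi).2

end SimpleGraph

namespace Polynomial

lemma eq_X_sub_C_pow_mul_X_sub_C_pow {K : Type*} [Field K] [IsAlgClosed K] {p : K[X]} {r s : K}
    (hrs : r ≠ s) (hp : p.Monic) (hroots : ∀ z, p.IsRoot z → z = r ∨ z = s) :
    p = (X - C r) ^ p.rootMultiplicity r * (X - C s) ^ p.rootMultiplicity s := by
  classical
  have hsplit : p.roots =
      .replicate (p.rootMultiplicity r) r + .replicate (p.rootMultiplicity s) s := by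
    ext z
    rw [count_roots, Multiset.count_add, Multiset.count_replicate, Multiset.count_replicate]
    by_cases hzr : z = r
    · simp [hzr, hrs.symm]
    by_cases hzs : z = s
    · simp [hzs, hrs]
    rw [rootMultiplicity_eq_zero fun hz ↦ (hroots z hz).elim hzr hzs]
    simp [Ne.symm hzr, Ne.symm hzs]
  conv_lhs => rw [(IsAlgClosed.splits p).eq_prod_roots_of_monic hp, hsplit]
  simp [Multiset.map_replicate, Multiset.prod_replicate]

lemma setOf_isRoot_ne_neg_two_zero {p : ℂ[X]} {n : ℕ} (hn : 3 ≤ n) (hdeg : p.natDegree ≤ n)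
    (hcoeff : ∀ k, n - 2 ≤ k → k ≤ n → p.coeff k = n.choose k) :
    {z : ℂ | p.IsRoot z} ≠ {-2, 0} := by
  intro hroots
  have hlead : p.coeff n = 1 := by simpa using hcoeff n (by omega) le_rfl
  have hmonic : p.Monic := monic_of_natDegree_le_of_coeff_eq_one n hdeg hlead
  have hnat : p.natDegree = n :=
    le_antisymm hdeg (le_natDegree_of_ne_zero (by simp [hlead]))
  have hfac := eq_X_sub_C_pow_mul_X_sub_C_pow (r := -2) (s := 0) (by norm_num) hmonic
    fun z hz ↦ by simpa using (hroots ▸ hz : z ∈ ({-2, 0} : Set ℂ))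
  rw [C_neg, sub_neg_eq_add, C_0, sub_zero] at hfac
  have hroot : p.IsRoot (-2) := by
    have : (-2 : ℂ) ∈ {z : ℂ | p.IsRoot z} := by rw [hroots]; simp
    exact this
  set b := p.rootMultiplicity (-2)
  set a := p.rootMultiplicity 0
  have hab : a + b = n := by
    rw [← hnat, hfac, ((monic_X_add_C 2).pow b).natDegree_mul (monic_X_pow a),
      (monic_X_add_C 2).natDegree_pow, natDegree_X_add_C, natDegree_X_pow]
    ring
  have hb : 0 < b := (rootMultiplicity_pos hmonic.ne_zero).mpr hroot
  have htop : ∀ j ≤ 2, j ≤ b → n.choose j = 2 ^ j * b.choose j := by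
    intro j hj2 hjb
    have h := coeff_mul_X_pow ((X + C (2 : ℂ)) ^ b) a (b - j)
    rw [← hfac, coeff_X_add_C_pow, Nat.sub_sub_self hjb, Nat.choose_symm hjb,
      show b - j + a = n - j by omega, hcoeff _ (by omega) (by omega),
      Nat.choose_symm (by omega)] at h
    exact_mod_cast h
  have hn2b : n = 2 * b := by simpa using htop 1 (by norm_num) hb
  have hchoose := htop 2 le_rfl (by omega)
  rw [hn2b] at hchoose
  have hchooseℚ := congrArg (Nat.cast : ℕ → ℚ) hchoose
  push_cast [Nat.cast_choose_two] at hchooseℚ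
  linarith [(by exact_mod_cast hb : (0 : ℚ) < b)]

end Polynomial

theorem stmt_15_general {V : Type*} [Fintype V] (G : SimpleGraph V)
    (h : {z : ℂ | G.DtPoly.IsRoot z} = {-2, 0}) :
    Fintype.card V ≤ 3 ∨
      ∃ S : Finset V, S.card ≤ 2 ∧ ¬(G.induce ((S : Set V)ᶜ)).Connected := by
  classical
  by_contra! ⟨hn, hconn⟩
  have hdeg : ∀ v, 3 ≤ G.degree v :=
    G.le_degree_of_forall_induce_connected hn fun S hS ↦ hconn S (by omega)
  refine Polynomial.setOf_isRoot_ne_neg_two_zero hn.le G.natDegree_DtPoly_le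
    (fun k hk hkn ↦ ?_) h
  have hTDS : ∀ D : Finset V, D.card = k → G.IsTDS D := fun D hD ↦
    G.isTDS_of_card_lt_card_add_degree fun v ↦ by have := hdeg v; omega
  rw [G.coeff_DtPoly (by omega) hkn, G.dt_eq_choose_of_forall_isTDS hTDS]

/-- If the set of distinct complex roots of `D_t(G,x)` is exactly `{-2, 0}`, then `G` is
not 3-connected: either `G` has at most 3 vertices, or some set of at most 2 vertices can
be deleted so as to disconnect `G`. -/
theorem stmt_15 {V : Type*} [Fintype V] [DecidableEq V] (G : SimpleGraph V)
    (h : {z : ℂ | G.DtPoly.IsRoot z} = {-2, 0}) :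
    Fintype.card V ≤ 3 ∨
      ∃ S : Finset V, S.card ≤ 2 ∧ ¬(G.induce ((S : Set V)ᶜ)).Connected :=
  stmt_15_general G h
end
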